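/- Let n, k, m be integers with n/2 ≤ k ≤ m ≤ n−2, and let G be a connected simple graph on n vertices with minimum degree at least k and maximum degree at most m. Then R'(G) ≥ n/2 − (n²/8)·(1/k − 1/m). -/

import Mathlib

/-!
When all degrees are positive, `1 / max a b = (1/a + 1/b - |1/a - 1/b|) / 2`; summing over
the darts (oriented edges) gives `R'(G) = n/2 - A/4` with `A = ∑ |1/d(u) - 1/d(v)|`.
Splitting `1/a - 1/b` into the telescoping steps `1/j - 1/(j+1)`, `k ≤ j < m`, each step is
paid once for every dart between `{v | d(v) ≤ j}` and its complement, and a cut `(S, Sᶜ)` is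
crossed by at most `2 |S| |Sᶜ| ≤ n²/2` darts. Hence `A ≤ n²/2 · (1/k - 1/m)`.
-/

open scoped Classical

/-- The variation of the Randić index: `R'(G) = ∑_{uv ∈ E(G)} 1 / max(d(u), d(v))`. -/
noncomputable def Rvar {V : Type*} [Fintype V] (G : SimpleGraph V) : ℝ :=
  ∑ e ∈ G.edgeFinset,
    Sym2.lift ⟨fun u v => (1 : ℝ) / (max (G.degree u) (G.degree v) : ℕ),
      fun u v => by dsimp only; rw [max_comm]⟩ e

open Finset

theorem Finset.sum_Ico_sub_succ {M : Type*} [AddCommGroup M] (f : ℕ → M) {m n : ℕ}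
    (hmn : m ≤ n) :
    ∑ i ∈ Ico m n, (f i - f (i + 1)) = f m - f n := by
  rw [← neg_sub (f n), ← sum_Ico_sub f hmn, ← sum_neg_distrib]
  simp only [neg_sub]

theorem abs_sub_eq_sum_Ico_of_antitoneOn {g : ℕ → ℝ} {k m a b : ℕ}
    (hg : AntitoneOn g (Set.Icc k m)) (ha : a ∈ Set.Icc k m) (hb : b ∈ Set.Icc k m) :
    |g a - g b| = ∑ j ∈ Ico k m, if ¬(a ≤ j ↔ b ≤ j) then g j - g (j + 1) else 0 := by
  wlog hab : a ≤ b generalizing a b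
  · rw [abs_sub_comm, this hb ha (by omega)]
    simp only [Iff.comm]
  have hcross : {j ∈ Ico k m | ¬(a ≤ j ↔ b ≤ j)} = Ico a b := by
    ext j
    simp only [mem_filter, mem_Ico, Set.mem_Icc] at ha hb ⊢
    omega
  rw [abs_of_nonneg (sub_nonneg.mpr (hg ha hb hab)), ← sum_filter, hcross, sum_Ico_sub_succ g hab]

theorem one_div_natCast_max {a b : ℕ} (ha : 0 < a) (hb : 0 < b) :
    1 / ((max a b : ℕ) : ℝ) = (1 / a + 1 / b - |1 / (a : ℝ) - 1 / b|) / 2 := by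
  rcases le_total a b with hab | hab
  · have : 1 / (b : ℝ) ≤ 1 / a :=
      one_div_le_one_div_of_le (by positivity) (by exact_mod_cast hab)
    rw [max_eq_right hab, abs_of_nonneg (by linarith)]
    ring
  · have : 1 / (a : ℝ) ≤ 1 / b :=
      one_div_le_one_div_of_le (by positivity) (by exact_mod_cast hab)
    rw [max_eq_left hab, abs_of_nonpos (by linarith)]
    ring

namespace SimpleGraph

variable {V : Type*} [Fintype V] (G : SimpleGraph V)

theorem sum_darts_fst {M : Type*} [AddCommMonoid M] (f : V → M) :
    ∑ d : G.Dart, f d.fst = ∑ v, G.degree v • f v := by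
  rw [← sum_fiberwise univ (fun d : G.Dart => d.fst)]
  refine sum_congr rfl fun v _ => ?_
  rw [sum_congr rfl fun d hd => by rw [(mem_filter.mp hd).2], sum_const]
  congr 1
  convert G.dart_fst_fiber_card_eq_degree v

theorem sum_darts_snd {M : Type*} [AddCommMonoid M] (f : V → M) :
    ∑ d : G.Dart, f d.snd = ∑ v, G.degree v • f v := by
  rw [← sum_darts_fst]
  exact Fintype.sum_equiv (Dart.symm_involutive.toPerm _) _ _ fun d => rfl

theorem sum_darts_eq_two_nsmul_sum_edgeFinset {M : Type*} [AddCommMonoid M] (g : V → V → M)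
    (hg : ∀ u v, g u v = g v u) :
    ∑ d : G.Dart, g d.fst d.snd = 2 • ∑ e ∈ G.edgeFinset, Sym2.lift ⟨g, hg⟩ e := by
  rw [← sum_fiberwise_of_maps_to (g := Dart.edge) (t := G.edgeFinset)
    fun d _ => mem_edgeFinset.mpr d.edge_mem, smul_sum]
  refine sum_congr rfl fun e he => ?_
  have hfiber : ∀ d ∈ ({d : G.Dart | d.edge = e} : Finset _),
      g d.fst d.snd = Sym2.lift ⟨g, hg⟩ e :=
    fun d hd => congrArg (Sym2.lift ⟨g, hg⟩) (mem_filter.mp hd).2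
  rw [sum_congr rfl hfiber, sum_const]
  congr 1
  convert G.dart_edge_fiber_card e (mem_edgeFinset.mp he)

theorem card_darts_cut_le (p : V → Prop) [DecidablePred p] :
    (#{d : G.Dart | ¬(p d.fst ↔ p d.snd)} : ℝ) ≤ Fintype.card V ^ 2 / 2 := by
  set S : Finset V := {v | p v}
  have hcut : #{d : G.Dart | ¬(p d.fst ↔ p d.snd)} ≤ #(S ×ˢ Sᶜ ∪ Sᶜ ×ˢ S) := by
    refine card_le_card_of_injOn Dart.toProd (fun d hd => ?_) Dart.toProd_injective.injOn
    simp only [coe_filter, Set.mem_ofPred_eq, coe_union, coe_product, coe_compl, Set.mem_union,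
      Set.mem_prod, Set.mem_compl_iff, S, mem_univ, true_and] at hd ⊢
    tauto
  have hunion : #(S ×ˢ Sᶜ ∪ Sᶜ ×ˢ S) ≤ 2 * #S * #Sᶜ :=
    calc _ ≤ #(S ×ˢ Sᶜ) + #(Sᶜ ×ˢ S) := card_union_le _ _
      _ = 2 * #S * #Sᶜ := by rw [card_product, card_product]; ring
  have hcutR : (#{d : G.Dart | ¬(p d.fst ↔ p d.snd)} : ℝ) ≤ 2 * #S * #Sᶜ := by
    exact_mod_cast hcut.trans hunion
  have hsplit : (#S : ℝ) + #Sᶜ = Fintype.card V := by exact_mod_cast card_add_card_compl S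
  nlinarith [sq_nonneg ((#S : ℝ) - #Sᶜ)]

theorem sum_darts_abs_sub_le {g : ℕ → ℝ} {k m : ℕ} (hg : AntitoneOn g (Set.Icc k m))
    (hkm : k ≤ m) (h : V → ℕ) (hh : ∀ v, h v ∈ Set.Icc k m) :
    ∑ d : G.Dart, |g (h d.fst) - g (h d.snd)| ≤ Fintype.card V ^ 2 / 2 * (g k - g m) := by
  have hstep : ∀ j ∈ Ico k m, 0 ≤ g j - g (j + 1) := fun j hj => by
    rw [mem_Ico] at hj
    exact sub_nonneg.mpr (hg (Set.mem_Icc.mpr ⟨hj.1, hj.2.le⟩)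
      (Set.mem_Icc.mpr ⟨by omega, hj.2⟩) j.le_succ)
  calc ∑ d : G.Dart, |g (h d.fst) - g (h d.snd)|
      = ∑ j ∈ Ico k m,
          #{d : G.Dart | ¬(h d.fst ≤ j ↔ h d.snd ≤ j)} * (g j - g (j + 1)) := by
        rw [sum_congr rfl fun d _ => abs_sub_eq_sum_Ico_of_antitoneOn hg (hh d.fst) (hh d.snd),
          sum_comm]
        refine sum_congr rfl fun j _ => ?_
        rw [← sum_filter, sum_const, nsmul_eq_mul]
    _ ≤ ∑ j ∈ Ico k m, Fintype.card V ^ 2 / 2 * (g j - g (j + 1)) :=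
        sum_le_sum fun j hj =>
          mul_le_mul_of_nonneg_right (G.card_darts_cut_le (h · ≤ j)) (hstep j hj)
    _ = Fintype.card V ^ 2 / 2 * (g k - g m) := by rw [← mul_sum, sum_Ico_sub_succ g hkm]

theorem two_mul_Rvar :
    2 * Rvar G = ∑ d : G.Dart, 1 / ((max (G.degree d.fst) (G.degree d.snd) : ℕ) : ℝ) := by
  rw [two_mul, Rvar, ← two_nsmul]
  exact (G.sum_darts_eq_two_nsmul_sum_edgeFinset
    (fun u v => (1 : ℝ) / (max (G.degree u) (G.degree v) : ℕ)) fun u v => by rw [max_comm]).symm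

theorem Rvar_eq_card_div_two_sub (hdeg : ∀ v, 0 < G.degree v) :
    Rvar G = Fintype.card V / 2 -
      (∑ d : G.Dart, |1 / (G.degree d.fst : ℝ) - 1 / G.degree d.snd|) / 4 := by
  have hinv : ∀ v, G.degree v • (1 / (G.degree v : ℝ)) = 1 := fun v => by
    rw [nsmul_eq_mul, mul_one_div_cancel (by exact_mod_cast (hdeg v).ne')]
  have hsum : ∑ d : G.Dart, (1 / (G.degree d.fst : ℝ) + 1 / G.degree d.snd) =
      2 * Fintype.card V := by
    rw [sum_add_distrib, G.sum_darts_fst fun v => 1 / (G.degree v : ℝ),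
      G.sum_darts_snd fun v => 1 / (G.degree v : ℝ), sum_congr rfl fun v _ => hinv v]
    simp only [sum_const, card_univ, nsmul_eq_mul, mul_one]
    ring
  have htwo := G.two_mul_Rvar
  rw [sum_congr rfl fun d _ => one_div_natCast_max (hdeg d.fst) (hdeg d.snd), ← sum_div,
    sum_sub_distrib, hsum] at htwo
  linarith

end SimpleGraph

theorem stmt_15_general {n k m : ℕ} (hnk : n ≤ 2 * k) (hkm : k ≤ m) (hmn : m + 2 ≤ n)
    {V : Type*} [Fintype V] (G : SimpleGraph V)
    (hcard : Fintype.card V = n)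
    (hmin : ∀ v : V, k ≤ G.degree v) (hmax : ∀ v : V, G.degree v ≤ m) :
    (n : ℝ) / 2 - (n : ℝ) ^ 2 / 8 * (1 / k - 1 / m) ≤ Rvar G := by
  subst hcard
  have hk : 0 < k := by omega
  have hanti : AntitoneOn (fun j : ℕ => 1 / (j : ℝ)) (Set.Icc k m) := fun a ha b _ hab =>
    one_div_le_one_div_of_le (by exact_mod_cast hk.trans_le ha.1) (by exact_mod_cast hab)
  have hcut := G.sum_darts_abs_sub_le hanti hkm (fun v => G.degree v) fun v => ⟨hmin v, hmax v⟩
  rw [G.Rvar_eq_card_div_two_sub fun v => hk.trans_le (hmin v)]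
  linarith

theorem stmt_15 {n k m : ℕ} (hnk : n ≤ 2 * k) (hkm : k ≤ m) (hmn : m + 2 ≤ n)
    {V : Type*} [Fintype V] (G : SimpleGraph V)
    (hcard : Fintype.card V = n) (hconn : G.Connected)
    (hmin : ∀ v : V, k ≤ G.degree v) (hmax : ∀ v : V, G.degree v ≤ m) :
    (n : ℝ) / 2 - (n : ℝ) ^ 2 / 8 * (1 / k - 1 / m) ≤ Rvar G :=
  stmt_15_general hnk hkm hmn G hcard hmin hmax
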